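/- Let N, n be as above (N ≥ n+5, n even, n > 2, k = n/2) and v the tuple defined there. Then −v is not a permutation of v; that is, the multiset of entries of v is not equal to the multiset of their negatives in Z/NZ. -/

import Mathlib

/-! The entry `N - 1 = -1` of `v` has negative `1`, which is not an entry of `v`: the remaining
entries `0, 2, k + 1, k + 3, …, N - k - 2` are residues of naturals below `N` other than `1`. -/

theorem Multiset.map_neg_ne_self_of_mem_of_neg_notMem {G : Type*} [InvolutiveNeg G]
    {s : Multiset G} {a : G} (ha : a ∈ s) (hna : -a ∉ s) : s.map (fun x => -x) ≠ s :=
  fun h => hna (h ▸ Multiset.mem_map_of_mem _ ha)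

theorem ZMod.natCast_eq_one_iff_of_lt {N a : ℕ} (hN : 1 < N) (ha : a < N) :
    (a : ZMod N) = 1 ↔ a = 1 := by
  rw [← Nat.cast_one, ZMod.natCast_eq_natCast_iff', Nat.mod_eq_of_lt ha, Nat.mod_eq_of_lt hN]

theorem stmt_9_general (N n : ℕ) (hn2 : 2 < n)
    (hN : n + 5 ≤ N) (k : ℕ) (hk : k = n / 2) :
    let v : Multiset (ZMod N) :=
      Multiset.replicate (n + 1) (0 : ZMod N) +
        {(2 : ZMod N), ((k : ZMod N) + 1)} +
        Multiset.map (fun j : ℕ => (j : ZMod N)) (Finset.Icc (k + 3) (N - k - 2)).val +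
        {((N : ZMod N) - 1)}
    Multiset.map (fun x : ZMod N => -x) v ≠ v := by
  intro v
  have hN1 : 1 < N := by omega
  have hcast (a : ℕ) (ha : a < N) (h1 : a ≠ 1) : (a : ZMod N) ≠ 1 :=
    (ZMod.natCast_eq_one_iff_of_lt hN1 ha).not.mpr h1
  refine Multiset.map_neg_ne_self_of_mem_of_neg_notMem (a := -1) (by simp [v]) ?_
  simp only [v, neg_neg, Multiset.mem_add, Multiset.mem_replicate, Multiset.mem_map,
    Multiset.mem_singleton, Multiset.insert_eq_cons, Multiset.mem_cons, Finset.mem_val,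
    Finset.mem_Icc, ZMod.natCast_self, zero_sub, not_or, not_exists, not_and]
  refine ⟨⟨⟨fun _ => ?_, ?_, ?_⟩, fun j hj => hcast j (by omega) (by omega)⟩, ?_⟩
  · exact_mod_cast (hcast 0 (by omega) (by omega)).symm
  · exact_mod_cast (hcast 2 (by omega) (by omega)).symm
  · exact_mod_cast (hcast (k + 1) (by omega) (by omega)).symm
  · have : Fact (2 < N) := ⟨by omega⟩
    exact ZMod.neg_one_ne_one.symm

/-- For the tuple `v` as above (`N ≥ n + 5`, `n` even, `n > 2`, `k = n/2`),
`−v` is not a permutation of `v`: the multiset of entries of `v` differs from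
the multiset of their negatives in `Z/NZ`. -/
theorem stmt_9 (N n : ℕ) (hn : Even n) (hn2 : 2 < n)
    (hN : n + 5 ≤ N) (k : ℕ) (hk : k = n / 2) :
    let v : Multiset (ZMod N) :=
      Multiset.replicate (n + 1) (0 : ZMod N) +
        {(2 : ZMod N), ((k : ZMod N) + 1)} +
        Multiset.map (fun j : ℕ => (j : ZMod N)) (Finset.Icc (k + 3) (N - k - 2)).val +
        {((N : ZMod N) - 1)}
    Multiset.map (fun x : ZMod N => -x) v ≠ v :=
  stmt_9_general N n hn2 hN k hk
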